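/- Under the trajectory distribution induced by any recommendation strategy g^ai, for every time t ≤ T, every history realization h_t of positive probability, and every recommendation value u^ai ∈ 𝒰, the conditional expected reward depends on h_t only through the pair of beliefs π_t = (b_t^s, b_t^x): E[r(X_t, g^h(S_t, u^ai)) | H_t = h_t] = Σ_{x ∈ 𝒳} Σ_{s ∈ 𝒮} r(x, g^h(s, u^ai)) · b_t^x(x) · b_t^s(s). -/

import Mathlib

/-!
Given a history `h`, the trajectory can be replayed from the primitive randomness: the
recorded human actions drive the system, so on `{H_t = h}` the state `X_t` is a function of
`(X₀, W)` alone, and the recorded observations together with the recommendations `g` makes on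
the prefixes of `h` drive the human, so `S_t` is a function of `(S₀, N)` alone. The event
`{H_t = h}` itself splits the same way: the recorded observations must be reproduced (a
condition on `(X₀, W, Z)`), and the recorded actions and recommendations must be reproduced
(a condition on `(S₀, N)`). The two groups of primitive variables are independent, so `X_t`
and `S_t` are conditionally independent given `H_t = h`, and the conditional expected reward
is the double sum against the product of the two beliefs.
-/

open scoped ENNReal

noncomputable section

namespace CPHS

variable {𝒳 𝒮 𝒴 𝒰 𝒲 𝒵 𝒩 : Type}

/-- i.i.d. product PMF on vectors of length `n`. -/
def pmfVec {α : Type} (p : PMF α) : (n : ℕ) → PMF (Fin n → α)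
  | 0 => PMF.pure Fin.elim0
  | n + 1 => (pmfVec p n).bind fun v => p.map fun a => Fin.snoc v a

/-- Safe getter for a vector of length `m + 1`. -/
def vget {α : Type} {m : ℕ} (v : Fin (m + 1) → α) (t : ℕ) : α :=
  v ⟨t % (m + 1), Nat.mod_lt _ (Nat.succ_pos m)⟩

/-- History at time `t`: observations `Y_{0:t}` and past actions `U^h_{0:t-1}`, `U^ai_{0:t-1}`. -/
def Hist (𝒴 𝒰 : Type) (t : ℕ) : Type :=
  (Fin (t + 1) → 𝒴) × (Fin t → 𝒰) × (Fin t → 𝒰)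

/-- Extension of a history by one step. -/
def Hist.ext {t : ℕ} (h : Hist 𝒴 𝒰 t) (y : 𝒴) (uh uai : 𝒰) : Hist 𝒴 𝒰 (t + 1) :=
  (Fin.snoc h.1 y, Fin.snoc h.2.1 uh, Fin.snoc h.2.2 uai)

/-- A recommendation strategy of the AI platform. -/
def Strat (𝒴 𝒰 : Type) : Type := (t : ℕ) → Hist 𝒴 𝒰 t → 𝒰

/-- The human–AI system model. -/
structure System (𝒳 𝒮 𝒴 𝒰 𝒲 𝒵 𝒩 : Type) where
  T : ℕ
  pX0 : PMF 𝒳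
  pS0 : PMF 𝒮
  pW : PMF 𝒲
  pZ : PMF 𝒵
  pN : PMF 𝒩
  f : 𝒳 → 𝒰 → 𝒲 → 𝒳
  o : 𝒳 → 𝒵 → 𝒴
  fh : 𝒮 → 𝒰 → 𝒴 → 𝒩 → 𝒮
  gh : 𝒮 → 𝒰 → 𝒰

namespace System

variable (M : System 𝒳 𝒮 𝒴 𝒰 𝒲 𝒵 𝒩)

/-- Primitive sample space: initial states and all noises. -/
abbrev Ω : Type :=
  𝒳 × 𝒮 × (Fin (M.T + 1) → 𝒲) × (Fin (M.T + 1) → 𝒵) × (Fin (M.T + 1) → 𝒩)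

/-- Joint PMF of the mutually independent primitive random variables. -/
def pΩ : PMF M.Ω :=
  M.pX0.bind fun x => M.pS0.bind fun s =>
    (pmfVec M.pW (M.T + 1)).bind fun w =>
      (pmfVec M.pZ (M.T + 1)).bind fun z =>
        (pmfVec M.pN (M.T + 1)).map fun n => (x, s, w, z, n)

/-- Trajectory `(X_t, S_t, H_t)` generated by strategy `g` from primitive randomness `ω`. -/
def traj (g : Strat 𝒴 𝒰) (ω : M.Ω) : (t : ℕ) → 𝒳 × 𝒮 × Hist 𝒴 𝒰 t
  | 0 => (ω.1, ω.2.1, (fun _ => M.o ω.1 (vget ω.2.2.2.1 0), Fin.elim0, Fin.elim0))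
  | t + 1 =>
      let p : 𝒳 × 𝒮 × Hist 𝒴 𝒰 t := traj g ω t
      let uai := g t p.2.2
      let uh := M.gh p.2.1 uai
      let x' := M.f p.1 uh (vget ω.2.2.1 t)
      let y' := M.o x' (vget ω.2.2.2.1 (t + 1))
      let s' := M.fh p.2.1 uai y' (vget ω.2.2.2.2 t)
      (x', s', Hist.ext p.2.2 y' uh uai)

/-- System state process. -/
def X (g : Strat 𝒴 𝒰) (ω : M.Ω) (t : ℕ) : 𝒳 := (M.traj g ω t).1
/-- Internal state process. -/
def S (g : Strat 𝒴 𝒰) (ω : M.Ω) (t : ℕ) : 𝒮 := (M.traj g ω t).2.1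
/-- History process. -/
def H (g : Strat 𝒴 𝒰) (ω : M.Ω) (t : ℕ) : Hist 𝒴 𝒰 t := (M.traj g ω t).2.2
/-- Observation process. -/
def Y (g : Strat 𝒴 𝒰) (ω : M.Ω) (t : ℕ) : 𝒴 := (M.H g ω t).1 (Fin.last t)
/-- AI recommendation process. -/
def Uai (g : Strat 𝒴 𝒰) (ω : M.Ω) (t : ℕ) : 𝒰 := g t (M.H g ω t)
/-- Human action process. -/
def Uh (g : Strat 𝒴 𝒰) (ω : M.Ω) (t : ℕ) : 𝒰 := M.gh (M.S g ω t) (M.Uai g ω t)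

/-- Probability of an event about the trajectory. -/
def pr (A : Set M.Ω) : ℝ := (M.pΩ.toOuterMeasure A).toReal

/-- Conditional probability `P(A | B)`. -/
def cpr (A B : Set M.Ω) : ℝ := M.pr (A ∩ B) / M.pr B

/-- Observation kernel `P(y | x')`. -/
def Po (y : 𝒴) (x' : 𝒳) : ℝ := (M.pZ.toOuterMeasure {z | M.o x' z = y}).toReal
/-- Transition kernel `P(x' | x, u)`. -/
def Pt (x' x : 𝒳) (u : 𝒰) : ℝ := (M.pW.toOuterMeasure {w | M.f x u w = x'}).toReal
/-- Internal-state kernel `P^h(s' | s, u, y)`. -/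
def Pn (s' s : 𝒮) (u : 𝒰) (y : 𝒴) : ℝ := (M.pN.toOuterMeasure {n | M.fh s u y n = s'}).toReal

/-- AI belief on the internal state, `b_t^s`. -/
def bS (g : Strat 𝒴 𝒰) {t : ℕ} (h : Hist 𝒴 𝒰 t) (s : 𝒮) : ℝ :=
  M.cpr {ω | M.S g ω t = s} {ω | M.H g ω t = h}

/-- AI belief on the system state, `b_t^x`. -/
def bX (g : Strat 𝒴 𝒰) {t : ℕ} (h : Hist 𝒴 𝒰 t) (x : 𝒳) : ℝ :=
  M.cpr {ω | M.X g ω t = x} {ω | M.H g ω t = h}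

/-- Conditional expectation `E[φ | B]`. -/
def cexp [Fintype 𝒳] [Fintype 𝒮] [Fintype 𝒲] [Fintype 𝒵] [Fintype 𝒩]
    (B : Set M.Ω) (φ : M.Ω → ℝ) : ℝ :=
  (∑ ω : M.Ω, Set.indicator B φ ω * (M.pΩ ω).toReal) / M.pr B

/-- Expected total discounted reward of a strategy. -/
def J [Fintype 𝒳] [Fintype 𝒮] [Fintype 𝒲] [Fintype 𝒵] [Fintype 𝒩]
    (g : Strat 𝒴 𝒰) (r : 𝒳 → 𝒰 → ℝ) (γ : ℝ) : ℝ :=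
  ∑ t ∈ Finset.range (M.T + 1), γ ^ t *
    ∑ ω : M.Ω, (M.pΩ ω).toReal * r (M.X g ω t) (M.Uh g ω t)


open Classical in
/-- The human's true conditional action distribution `P(U_t^h = u | h_t, u^ai)`. -/
def actDist [Fintype 𝒮] (g : Strat 𝒴 𝒰) {t : ℕ} (h : Hist 𝒴 𝒰 t) (uai u : 𝒰) : ℝ :=
  ∑ s, (if u = M.gh s uai then (1 : ℝ) else 0) * M.bS g h s

open Classical in
/-- One-step Bellman operator on histories, using the beliefs `b_t^s, b_t^x`. -/
def Qstep [Fintype 𝒳] [Fintype 𝒮] [Fintype 𝒴] [Fintype 𝒰]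
    (g : Strat 𝒴 𝒰) (r : 𝒳 → 𝒰 → ℝ) (γ : ℝ) {t : ℕ} (h : Hist 𝒴 𝒰 t) (u : 𝒰)
    (Vnext : Hist 𝒴 𝒰 (t + 1) → ℝ) : ℝ :=
  (∑ x, ∑ s, r x (M.gh s u) * M.bX g h x * M.bS g h s) +
    γ * ∑ y' : 𝒴, ∑ uh : 𝒰,
      (∑ s, (if uh = M.gh s u then (1 : ℝ) else 0) * M.bS g h s) *
        (∑ x', ∑ x, M.Po y' x' * M.Pt x' x uh * M.bX g h x) * Vnext (h.ext y' uh u)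

/-- Backward value recursion on histories; `n` is the number of remaining stages,
so that `V̄_t = Vbar (T + 1 - t) t` and `V̄_{T+1} ≡ 0`. -/
def Vbar [Fintype 𝒳] [Fintype 𝒮] [Fintype 𝒴] [Fintype 𝒰] [Nonempty 𝒰]
    (g : Strat 𝒴 𝒰) (r : 𝒳 → 𝒰 → ℝ) (γ : ℝ) : (n : ℕ) → (t : ℕ) → Hist 𝒴 𝒰 t → ℝ
  | 0, _, _ => 0
  | n + 1, t, h =>
      Finset.univ.sup' Finset.univ_nonempty fun u =>
        M.Qstep g r γ h u (Vbar g r γ n (t + 1))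

/-- `Q̄_t(h_t, u)`, defined through `V̄_{t+1}`. -/
def Qbar [Fintype 𝒳] [Fintype 𝒮] [Fintype 𝒴] [Fintype 𝒰] [Nonempty 𝒰]
    (g : Strat 𝒴 𝒰) (r : 𝒳 → 𝒰 → ℝ) (γ : ℝ) (t : ℕ) (h : Hist 𝒴 𝒰 t) (u : 𝒰) : ℝ :=
  M.Qstep g r γ h u (M.Vbar g r γ (M.T - t) (t + 1))

/-- `V̄_t(h_t) = max_u Q̄_t(h_t, u)`. -/
def VbarT [Fintype 𝒳] [Fintype 𝒮] [Fintype 𝒴] [Fintype 𝒰] [Nonempty 𝒰]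
    (g : Strat 𝒴 𝒰) (r : 𝒳 → 𝒰 → ℝ) (γ : ℝ) (t : ℕ) (h : Hist 𝒴 𝒰 t) : ℝ :=
  M.Vbar g r γ (M.T + 1 - t) t h

/-- Bayes-filter update `ψ^x` of the system-state belief. -/
def bayesX [Fintype 𝒳] (b : 𝒳 → ℝ) (uh : 𝒰) (y : 𝒴) : 𝒳 → ℝ := fun x' =>
  (∑ x, M.Po y x' * M.Pt x' x uh * b x) /
    (∑ x'', ∑ x, M.Po y x'' * M.Pt x'' x uh * b x)

/-- One-step Bellman operator of the approximate human model on `Sh × Δ(𝒳)`. -/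
def Qhatstep {Sh : Type} [Fintype 𝒳] [Fintype 𝒴] [Fintype 𝒰]
    (μhat : Sh → 𝒰 → PMF 𝒰) (ψhat : Sh → 𝒰 → 𝒴 → Sh) (r : 𝒳 → 𝒰 → ℝ) (γ : ℝ)
    (π : Sh × (𝒳 → ℝ)) (u : 𝒰) (Vnext : Sh × (𝒳 → ℝ) → ℝ) : ℝ :=
  (∑ x, ∑ uh, r x uh * π.2 x * (μhat π.1 u uh).toReal) +
    γ * ∑ y' : 𝒴, ∑ uh : 𝒰, (μhat π.1 u uh).toReal *
      (∑ x', ∑ x, M.Po y' x' * M.Pt x' x uh * π.2 x) *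
      Vnext (ψhat π.1 u y', M.bayesX π.2 uh y')

/-- Approximate value recursion; `n` is the number of remaining stages, so that
`V̂_t = Vhat (T + 1 - t)` and `V̂_{T+1} ≡ 0`. -/
def Vhat {Sh : Type} [Fintype 𝒳] [Fintype 𝒴] [Fintype 𝒰] [Nonempty 𝒰]
    (μhat : Sh → 𝒰 → PMF 𝒰) (ψhat : Sh → 𝒰 → 𝒴 → Sh) (r : 𝒳 → 𝒰 → ℝ) (γ : ℝ) :
    (n : ℕ) → Sh × (𝒳 → ℝ) → ℝ
  | 0, _ => 0
  | n + 1, π =>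
      Finset.univ.sup' Finset.univ_nonempty fun u =>
        M.Qhatstep μhat ψhat r γ π u (Vhat μhat ψhat r γ n)

/-- `Q̂_t(π̂, u)`, defined through `V̂_{t+1}`. -/
def Qhat {Sh : Type} [Fintype 𝒳] [Fintype 𝒴] [Fintype 𝒰] [Nonempty 𝒰]
    (μhat : Sh → 𝒰 → PMF 𝒰) (ψhat : Sh → 𝒰 → 𝒴 → Sh) (r : 𝒳 → 𝒰 → ℝ) (γ : ℝ)
    (t : ℕ) (π : Sh × (𝒳 → ℝ)) (u : 𝒰) : ℝ :=
  M.Qhatstep μhat ψhat r γ π u (M.Vhat μhat ψhat r γ (M.T - t))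

end System

/-- Total variation distance between two distributions on a finite type,
given as real-valued mass functions. -/
def tv {α : Type} [Fintype α] (p q : α → ℝ) : ℝ := (1 / 2) * ∑ a, |p a - q a|

theorem _root_.PMF.toOuterMeasure_toReal_eq_sum {Ω : Type} [Fintype Ω] (p : PMF Ω)
    (A : Set Ω) :
    (p.toOuterMeasure A).toReal = ∑ ω, A.indicator (fun ω => (p ω).toReal) ω := by
  rw [p.toOuterMeasure_apply_fintype, ENNReal.toReal_sum fun ω _ => ?_]
  · exact Finset.sum_congr rfl fun ω _ => by by_cases hω : ω ∈ A <;> simp [hω]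
  · exact ne_top_of_le_ne_top (p.apply_ne_top ω) (Set.indicator_le_self _ _ ω)

theorem _root_.PMF.sum_indicator_comp_mul_toReal {Ω γ : Type} [Fintype Ω] [Fintype γ]
    (p : PMF Ω) (B : Set Ω) (V : Ω → γ) (φ : γ → ℝ) :
    ∑ ω, B.indicator (φ ∘ V) ω * (p ω).toReal =
      ∑ c, φ c * (p.toOuterMeasure ({ω | V ω = c} ∩ B)).toReal := by
  classical
  simp only [PMF.toOuterMeasure_toReal_eq_sum, Finset.mul_sum]
  rw [Finset.sum_comm]
  refine Finset.sum_congr rfl fun ω _ => ?_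
  by_cases hω : ω ∈ B <;> simp [hω, Set.indicator_apply]


def Hist.init {t : ℕ} (h : Hist 𝒴 𝒰 (t + 1)) : Hist 𝒴 𝒰 t :=
  (Fin.init h.1, Fin.init h.2.1, Fin.init h.2.2)

theorem Hist.ext_eq_iff {t : ℕ} (h : Hist 𝒴 𝒰 t) (y : 𝒴) (uh uai : 𝒰)
    (h' : Hist 𝒴 𝒰 (t + 1)) :
    h.ext y uh uai = h' ↔ h = h'.init ∧ y = h'.1 (Fin.last (t + 1)) ∧
      uh = h'.2.1 (Fin.last t) ∧ uai = h'.2.2 (Fin.last t) := by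
  constructor
  · rintro rfl
    simp only [Hist.ext, Hist.init, Fin.init_snoc, Fin.snoc_last]
    exact ⟨rfl, trivial, trivial, trivial⟩
  · rintro ⟨rfl, rfl, rfl, rfl⟩
    simp only [Hist.ext, Hist.init, Fin.snoc_init_self]
    rfl

namespace System

variable (M : System 𝒳 𝒮 𝒴 𝒰 𝒲 𝒵 𝒩) (g : Strat 𝒴 𝒰)

def replayX : (t : ℕ) → Hist 𝒴 𝒰 t → 𝒳 → (Fin (M.T + 1) → 𝒲) → 𝒳
  | 0, _, x₀, _ => x₀
  | t + 1, h, x₀, w => M.f (replayX t h.init x₀ w) (h.2.1 (Fin.last t)) (vget w t)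

def replayS : (t : ℕ) → Hist 𝒴 𝒰 t → 𝒮 → (Fin (M.T + 1) → 𝒩) → 𝒮
  | 0, _, s₀, _ => s₀
  | t + 1, h, s₀, n =>
      M.fh (replayS t h.init s₀ n) (g t h.init) (h.1 (Fin.last (t + 1))) (vget n t)

def SysConsistent :
    (t : ℕ) → Hist 𝒴 𝒰 t → 𝒳 → (Fin (M.T + 1) → 𝒲) → (Fin (M.T + 1) → 𝒵) → Prop
  | 0, h, x₀, _, z => M.o x₀ (vget z 0) = h.1 0
  | t + 1, h, x₀, w, z =>
      SysConsistent t h.init x₀ w z ∧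
        M.o (M.replayX (t + 1) h x₀ w) (vget z (t + 1)) = h.1 (Fin.last (t + 1))

def HumConsistent : (t : ℕ) → Hist 𝒴 𝒰 t → 𝒮 → (Fin (M.T + 1) → 𝒩) → Prop
  | 0, _, _, _ => True
  | t + 1, h, s₀, n =>
      HumConsistent t h.init s₀ n ∧ g t h.init = h.2.2 (Fin.last t) ∧
        M.gh (M.replayS g t h.init s₀ n) (g t h.init) = h.2.1 (Fin.last t)

theorem H_succ (ω : M.Ω) (t : ℕ) :
    M.H g ω (t + 1) =
      (M.H g ω t).ext (M.o (M.X g ω (t + 1)) (vget ω.2.2.2.1 (t + 1)))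
        (M.gh (M.S g ω t) (g t (M.H g ω t))) (g t (M.H g ω t)) := rfl

theorem X_succ (ω : M.Ω) (t : ℕ) :
    M.X g ω (t + 1) = M.f (M.X g ω t) (M.gh (M.S g ω t) (g t (M.H g ω t))) (vget ω.2.2.1 t) :=
  rfl

theorem S_succ (ω : M.Ω) (t : ℕ) :
    M.S g ω (t + 1) = M.fh (M.S g ω t) (g t (M.H g ω t))
      (M.o (M.X g ω (t + 1)) (vget ω.2.2.2.1 (t + 1))) (vget ω.2.2.2.2 t) :=
  rfl

theorem X_eq_replayX_and_S_eq_replayS {ω : M.Ω} :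
    ∀ {t : ℕ} {h : Hist 𝒴 𝒰 t}, M.H g ω t = h →
      M.X g ω t = M.replayX t h ω.1 ω.2.2.1 ∧ M.S g ω t = M.replayS g t h ω.2.1 ω.2.2.2.2
  | 0, _, _ => ⟨rfl, rfl⟩
  | t + 1, h, hH => by
    rw [H_succ, Hist.ext_eq_iff] at hH
    obtain ⟨hinit, hy, huh, -⟩ := hH
    obtain ⟨hX, hS⟩ := X_eq_replayX_and_S_eq_replayS hinit
    refine ⟨?_, ?_⟩
    · rw [X_succ, replayX, ← huh, hX]
    · rw [S_succ, replayS, hy, hS, hinit]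

theorem H_eq_iff {ω : M.Ω} : ∀ {t : ℕ} {h : Hist 𝒴 𝒰 t}, M.H g ω t = h ↔
      M.SysConsistent t h ω.1 ω.2.2.1 ω.2.2.2.1 ∧ M.HumConsistent g t h ω.2.1 ω.2.2.2.2
  | 0, h => by
    obtain ⟨ys, uhs, uais⟩ := h
    show ((fun _ => _, Fin.elim0, Fin.elim0) : Hist 𝒴 𝒰 0) = _ ↔ _
    simp only [SysConsistent, HumConsistent, and_true, Prod.mk.injEq, funext_iff,
      IsEmpty.forall_iff]
    exact ⟨fun hy => hy 0, fun hy i => by rwa [Fin.fin_one_eq_zero i]⟩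
  | t + 1, h => by
    rw [SysConsistent, HumConsistent]
    constructor
    · intro hH
      obtain ⟨hX, -⟩ := M.X_eq_replayX_and_S_eq_replayS g hH
      rw [H_succ, Hist.ext_eq_iff] at hH
      obtain ⟨hinit, hy, huh, huai⟩ := hH
      obtain ⟨-, hS⟩ := M.X_eq_replayX_and_S_eq_replayS g hinit
      obtain ⟨hsys, hhum⟩ := H_eq_iff.mp hinit
      rw [hX] at hy
      rw [hS, hinit] at huh
      rw [hinit] at huai
      exact ⟨⟨hsys, hy⟩, hhum, huai, huh⟩
    · rintro ⟨⟨hsys, hy⟩, hhum, huai, huh⟩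
      have hinit : M.H g ω t = h.init := H_eq_iff.mpr ⟨hsys, hhum⟩
      obtain ⟨hX, hS⟩ := M.X_eq_replayX_and_S_eq_replayS g hinit
      rw [H_succ, Hist.ext_eq_iff, X_succ, hX, hS, hinit, huh]
      exact ⟨rfl, hy, rfl, huai⟩

end System

namespace System

variable [Fintype 𝒳] [Fintype 𝒮] [Fintype 𝒲] [Fintype 𝒵] [Fintype 𝒩]
variable (M : System 𝒳 𝒮 𝒴 𝒰 𝒲 𝒵 𝒩)

theorem pΩ_apply (x : 𝒳) (s : 𝒮) (w : Fin (M.T + 1) → 𝒲) (z : Fin (M.T + 1) → 𝒵)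
    (n : Fin (M.T + 1) → 𝒩) :
    M.pΩ (x, s, w, z, n) = M.pX0 x * M.pS0 s * pmfVec M.pW (M.T + 1) w *
      pmfVec M.pZ (M.T + 1) z * pmfVec M.pN (M.T + 1) n := by
  classical
  simp [pΩ, PMF.bind_apply, PMF.map_apply, tsum_fintype, ite_and, mul_assoc]

open Classical in
def sysProb (P : 𝒳 → (Fin (M.T + 1) → 𝒲) → (Fin (M.T + 1) → 𝒵) → Prop) : ℝ :=
  ∑ x, ∑ w, ∑ z, if P x w z then
    (M.pX0 x * pmfVec M.pW (M.T + 1) w * pmfVec M.pZ (M.T + 1) z).toReal else 0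

open Classical in
def humProb (Q : 𝒮 → (Fin (M.T + 1) → 𝒩) → Prop) : ℝ :=
  ∑ s, ∑ n, if Q s n then (M.pS0 s * pmfVec M.pN (M.T + 1) n).toReal else 0

theorem pr_sys_and_hum (P : 𝒳 → (Fin (M.T + 1) → 𝒲) → (Fin (M.T + 1) → 𝒵) → Prop)
    (Q : 𝒮 → (Fin (M.T + 1) → 𝒩) → Prop) :
    M.pr {ω | P ω.1 ω.2.2.1 ω.2.2.2.1 ∧ Q ω.2.1 ω.2.2.2.2} = M.sysProb P * M.humProb Q := by
  classical
  simp only [pr, PMF.toOuterMeasure_toReal_eq_sum, Fintype.sum_prod_type, sysProb, humProb,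
    Finset.sum_mul]
  simp only [Finset.mul_sum]
  refine Fintype.sum_congr _ _ fun x => ?_
  rw [Finset.sum_comm]
  refine Fintype.sum_congr _ _ fun w => ?_
  rw [Finset.sum_comm]
  refine Fintype.sum_congr _ _ fun z => Fintype.sum_congr _ _ fun s =>
    Fintype.sum_congr _ _ fun n => ?_
  simp only [Set.indicator_apply, pΩ_apply, ite_zero_mul_ite_zero,
    ← ENNReal.toReal_mul]
  congr 2
  ring

theorem pr_X_S_H_eq_sysProb_mul_humProb (g : Strat 𝒴 𝒰) (t : ℕ) (h : Hist 𝒴 𝒰 t)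
    (A : Set 𝒳) (B : Set 𝒮) :
    M.pr ({ω | M.X g ω t ∈ A} ∩ {ω | M.S g ω t ∈ B} ∩ {ω | M.H g ω t = h}) =
      M.sysProb (fun x w z => M.SysConsistent t h x w z ∧ M.replayX t h x w ∈ A) *
        M.humProb (fun s n => M.HumConsistent g t h s n ∧ M.replayS g t h s n ∈ B) := by
  rw [← pr_sys_and_hum]
  congr 1
  ext ω
  constructor
  · rintro ⟨⟨hA, hB⟩, hH⟩
    obtain ⟨hX, hS⟩ := M.X_eq_replayX_and_S_eq_replayS g hH
    obtain ⟨hsys, hhum⟩ := (M.H_eq_iff g).mp hH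
    exact ⟨⟨hsys, hX ▸ hA⟩, hhum, hS ▸ hB⟩
  · rintro ⟨⟨hsys, hA⟩, hhum, hB⟩
    have hH := (M.H_eq_iff g).mpr ⟨hsys, hhum⟩
    obtain ⟨hX, hS⟩ := M.X_eq_replayX_and_S_eq_replayS g hH
    exact ⟨⟨(hX ▸ hA : M.X g ω t ∈ A), (hS ▸ hB : M.S g ω t ∈ B)⟩, hH⟩

theorem pr_X_S_H_mul_pr_H (g : Strat 𝒴 𝒰) (t : ℕ) (h : Hist 𝒴 𝒰 t) (x : 𝒳) (s : 𝒮) :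
    M.pr ({ω | M.X g ω t = x} ∩ {ω | M.S g ω t = s} ∩ {ω | M.H g ω t = h}) *
        M.pr {ω | M.H g ω t = h} =
      M.pr ({ω | M.X g ω t = x} ∩ {ω | M.H g ω t = h}) *
        M.pr ({ω | M.S g ω t = s} ∩ {ω | M.H g ω t = h}) := by
  -- All four probabilities are products `sysProb _ * humProb _` of the same four factors.
  have key := M.pr_X_S_H_eq_sysProb_mul_humProb g t h
  have hxs := key {x} {s}
  have hx := key {x} Set.univ
  have hs := key Set.univ {s}
  have hH := key Set.univ Set.univ
  simp only [Set.mem_univ, Set.ofPred_true, Set.univ_inter, Set.inter_univ,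
    Set.mem_singleton_iff] at hxs hx hs hH
  rw [hxs, hx, hs, hH]
  ring

theorem cexp_eq_sum_cpr {α β : Type} [Fintype α] [Fintype β] (B : Set M.Ω)
    (U : M.Ω → α) (V : M.Ω → β) (φ : α → β → ℝ) :
    M.cexp B (fun ω => φ (U ω) (V ω)) =
      ∑ a, ∑ b, φ a b * M.cpr ({ω | U ω = a} ∩ {ω | V ω = b}) B := by
  rw [cexp, ← Function.comp_def (fun c : α × β => φ c.1 c.2) fun ω => (U ω, V ω),
    PMF.sum_indicator_comp_mul_toReal, Fintype.sum_prod_type, Finset.sum_div]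
  refine Fintype.sum_congr _ _ fun a => ?_
  rw [Finset.sum_div]
  refine Fintype.sum_congr _ _ fun b => ?_
  simp only [cpr, pr, Prod.mk.injEq, Set.ofPred_and, Set.inter_assoc, mul_div_assoc]

theorem cpr_X_S_eq_bX_mul_bS (g : Strat 𝒴 𝒰) {t : ℕ} {h : Hist 𝒴 𝒰 t}
    (hH : M.pr {ω | M.H g ω t = h} ≠ 0) (x : 𝒳) (s : 𝒮) :
    M.cpr ({ω | M.X g ω t = x} ∩ {ω | M.S g ω t = s}) {ω | M.H g ω t = h} =
      M.bX g h x * M.bS g h s := by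
  rw [bX, bS, cpr, cpr, cpr, div_mul_div_comm, eq_div_iff (mul_ne_zero hH hH), ← mul_assoc,
    div_mul_cancel₀ _ hH, pr_X_S_H_mul_pr_H]

end System

theorem statement_5_general {𝒳 𝒮 𝒴 𝒰 𝒲 𝒵 𝒩 : Type}
    [Fintype 𝒳] [Fintype 𝒮] [Fintype 𝒲] [Fintype 𝒵] [Fintype 𝒩]
    (M : System 𝒳 𝒮 𝒴 𝒰 𝒲 𝒵 𝒩) (g : Strat 𝒴 𝒰) (r : 𝒳 → 𝒰 → ℝ)
    (t : ℕ) (h : Hist 𝒴 𝒰 t)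
    (hpos : 0 < M.pr {ω | M.H g ω t = h}) (uai : 𝒰) :
    M.cexp {ω | M.H g ω t = h} (fun ω => r (M.X g ω t) (M.gh (M.S g ω t) uai))
      = ∑ x, ∑ s, r x (M.gh s uai) * M.bX g h x * M.bS g h s := by
  rw [M.cexp_eq_sum_cpr _ (M.X g · t) (M.S g · t) fun x s => r x (M.gh s uai)]
  simp only [M.cpr_X_S_eq_bX_mul_bS g hpos.ne', mul_assoc]

/-- the conditional expected reward depends on the history only
through the pair of beliefs `(b_t^s, b_t^x)`. -/
theorem statement_5 {𝒳 𝒮 𝒴 𝒰 𝒲 𝒵 𝒩 : Type}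
    [Fintype 𝒳] [Fintype 𝒮] [Fintype 𝒴] [Fintype 𝒰] [Fintype 𝒲] [Fintype 𝒵] [Fintype 𝒩]
    [Nonempty 𝒳] [Nonempty 𝒮] [Nonempty 𝒴] [Nonempty 𝒰] [DecidableEq 𝒰]
    (M : System 𝒳 𝒮 𝒴 𝒰 𝒲 𝒵 𝒩) (g : Strat 𝒴 𝒰) (r : 𝒳 → 𝒰 → ℝ)
    (t : ℕ) (ht : t ≤ M.T) (h : Hist 𝒴 𝒰 t)
    (hpos : 0 < M.pr {ω | M.H g ω t = h}) (uai : 𝒰) :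
    M.cexp {ω | M.H g ω t = h} (fun ω => r (M.X g ω t) (M.gh (M.S g ω t) uai))
      = ∑ x, ∑ s, r x (M.gh s uai) * M.bX g h x * M.bS g h s :=
  statement_5_general M g r t h hpos uai

end CPHS
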